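/- Let v_ρ > 0 and let B(z₁,r₁), …, B(z_K,r_K) be K ≥ 2 pairwise disjoint closed discs in R² with r_i > v_ρ for all i, R := max_i r_i, and suppose the discs are pairwise far apart: |z_i − z_j| > R³ for all i ≠ j. If additionally R³ is large enough that 4R·arcsin(2/R²) ≤ c·v_ρ^{−1} for a universal constant c (which holds for v_ρ large), then the μ-measure of lines hitting the union satisfies 2π ∑_{i=1}^K r_i − c'·v_ρ^{−1} ≤ μ(lines hitting ⋃_i B(z_i,r_i)) ≤ 2π ∑_{i=1}^K r_i, for a constant c' depending only on K. -/

import Mathlib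

open MeasureTheory Real Set

noncomputable def lineSet (α t : ℝ) : Set (EuclideanSpace ℝ (Fin 2)) :=
  {x | x 0 * Real.cos α + x 1 * Real.sin α = t}

noncomputable def lineMeas (A : Set (EuclideanSpace ℝ (Fin 2))) : ENNReal :=
  ∫⁻ α in Set.Ico (0:ℝ) (2 * Real.pi), ∫⁻ t in Set.Ioi (0:ℝ),
    Set.indicator {t' : ℝ | (lineSet α t' ∩ A).Nonempty} (fun _ => (1 : ENNReal)) t

/-!
A line `lineSet α t` meets `B(z, r)` iff `|⟪u_α, z⟫ - t| ≤ r`, where `u_α = (cos α, sin α)`.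
So for each direction the lines hitting a disc form an interval of length `2r` in `t`, and the
lines hitting a disc have measure `2πr`; subadditivity gives the upper bound. For the lower
bound, Bonferroni's inequality leaves the measure of the lines hitting two discs. Such a line
has a direction with `|⟪u_α, z_i - z_j⟫| ≤ r_i + r_j`; writing `z_i - z_j = ‖z_i - z_j‖ u_θ`,
this says `|cos (α - θ)| ≤ (r_i + r_j) / ‖z_i - z_j‖ ≤ 2 / R²`, which confines `α` to a set of
measure `O(arcsin (2 / R²))`, and for each such `α` the `t`'s form an interval of length at
most `2R`.
-/

open scoped RealInnerProductSpace

theorem inter_closedBall_nonempty_iff {E : Type*} [NormedAddCommGroup E] [InnerProductSpace ℝ E]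
    {u : E} (hu : ‖u‖ = 1) (t r : ℝ) (z : E) :
    ({x | ⟪u, x⟫ = t} ∩ Metric.closedBall z r).Nonempty ↔ |⟪u, z⟫ - t| ≤ r := by
  constructor
  · rintro ⟨x, hx, hxz⟩
    calc |⟪u, z⟫ - t| = |⟪u, z - x⟫| := by rw [inner_sub_right, hx.out]
      _ ≤ ‖u‖ * ‖z - x‖ := abs_real_inner_le_norm u (z - x)
      _ ≤ r := by rw [hu, one_mul, ← dist_eq_norm, dist_comm]; exact hxz
  · intro h
    refine ⟨z - (⟪u, z⟫ - t) • u, ?_, ?_⟩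
    · simp [inner_sub_right, inner_smul_right, hu]
    · simpa [dist_eq_norm, norm_smul, hu] using h

noncomputable def unitVec (α : ℝ) : EuclideanSpace ℝ (Fin 2) := !₂[cos α, sin α]

theorem inner_unitVec (α : ℝ) (x : EuclideanSpace ℝ (Fin 2)) :
    ⟪unitVec α, x⟫ = x 0 * cos α + x 1 * sin α := by
  simp [unitVec, PiLp.inner_apply, Fin.sum_univ_two]

theorem norm_unitVec (α : ℝ) : ‖unitVec α‖ = 1 := by
  simp [unitVec, EuclideanSpace.norm_eq, Fin.sum_univ_two]

theorem inner_unitVec_unitVec (α θ : ℝ) : ⟪unitVec α, unitVec θ⟫ = cos (α - θ) := by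
  rw [inner_unitVec, cos_sub]
  simp [unitVec]
  ring

theorem lineSet_eq (α t : ℝ) : lineSet α t = {x | ⟪unitVec α, x⟫ = t} := by
  simp only [lineSet, inner_unitVec]

theorem lineSet_add_pi (α t : ℝ) : lineSet (α + π) t = lineSet α (-t) := by
  ext x
  simp only [lineSet, mem_ofPred_eq, cos_add_pi, sin_add_pi]
  constructor <;> intro h <;> linarith

theorem exists_eq_norm_smul_unitVec (w : EuclideanSpace ℝ (Fin 2)) :
    ∃ θ ∈ Ioc (-π) π, w = ‖w‖ • unitVec θ := by
  set ζ : ℂ := ⟨w 0, w 1⟩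
  have hζ : ‖ζ‖ = ‖w‖ := by
    rw [Complex.norm_def, Complex.normSq_mk, EuclideanSpace.norm_eq, Fin.sum_univ_two]
    simp [sq]
  refine ⟨ζ.arg, ⟨Complex.neg_pi_lt_arg ζ, Complex.arg_le_pi ζ⟩, ?_⟩
  ext i
  fin_cases i
  · simp [unitVec, ← hζ, Complex.norm_mul_cos_arg, ζ]
  · simp [unitVec, ← hζ, Complex.norm_mul_sin_arg, ζ]

def lineHits (A : Set (EuclideanSpace ℝ (Fin 2))) : Set (ℝ × ℝ) :=
  {p | (lineSet p.1 p.2 ∩ A).Nonempty}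

theorem lineHits_iUnion {ι : Sort*} (A : ι → Set (EuclideanSpace ℝ (Fin 2))) :
    lineHits (⋃ i, A i) = ⋃ i, lineHits (A i) := by
  ext p
  simp only [lineHits, inter_iUnion, nonempty_iUnion, mem_ofPred_eq, mem_iUnion]

theorem lineHits_closedBall (z : EuclideanSpace ℝ (Fin 2)) (r : ℝ) :
    lineHits (Metric.closedBall z r) = {p | |⟪unitVec p.1, z⟫ - p.2| ≤ r} := by
  ext p
  simp only [lineHits, lineSet_eq, mem_ofPred_eq, inter_closedBall_nonempty_iff (norm_unitVec _)]

theorem measurableSet_lineHits_closedBall (z : EuclideanSpace ℝ (Fin 2)) (r : ℝ) :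
    MeasurableSet (lineHits (Metric.closedBall z r)) := by
  rw [lineHits_closedBall]
  simp only [inner_unitVec]
  exact measurableSet_le (by fun_prop) measurable_const

theorem volume_inter_Ioi_add_volume_neg_inter_Ioi (s : Set ℝ) :
    volume (s ∩ Ioi 0) + volume (-s ∩ Ioi 0) = volume s := by
  have hneg : volume (-s ∩ Ioi 0) = volume (s \ Ioi 0) := by
    rw [← Measure.measure_neg, Set.inter_neg, neg_neg, Set.neg_Ioi, neg_zero, sdiff_eq, compl_Ioi]
    exact measure_congr (ae_eq_set_inter (ae_eq_refl s) Iio_ae_eq_Iic)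
  rw [hneg, measure_inter_add_sdiff s measurableSet_Ioi]

/-- The measure `dα dt` on lines, in coordinates where each line is `lineSet α t` for exactly
one `(α, t) ∈ [0, π) × ℝ`. -/
noncomputable def lineMeasure : Measure (ℝ × ℝ) :=
  (volume.restrict (Ico 0 π)).prod volume

/-- `lineSet (α + π) (-t) = lineSet α t`, so the half-plane `t > 0` over `α ∈ [0, 2π)` used by
`lineMeas` can be traded for the whole line `t ∈ ℝ` over `α ∈ [0, π)`. -/
theorem lineMeas_eq_lineMeasure {A : Set (EuclideanSpace ℝ (Fin 2))}
    (hA : MeasurableSet (lineHits A)) : lineMeas A = lineMeasure (lineHits A) := by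
  set F : ℝ → ENNReal := fun α ↦ volume.restrict (Ioi 0) (Prod.mk α ⁻¹' lineHits A)
  have hF : Measurable F := measurable_measure_prodMk_left hA
  have hF_add_pi (α : ℝ) :
      F α + F (α + π) = volume (Prod.mk α ⁻¹' lineHits A) := by
    have hslice : Prod.mk (α + π) ⁻¹' lineHits A = -(Prod.mk α ⁻¹' lineHits A) := by
      ext t
      simp only [mem_preimage, lineHits, mem_ofPred_eq, lineSet_add_pi, mem_neg]
    simp only [F, Measure.restrict_apply' measurableSet_Ioi, hslice]
    exact volume_inter_Ioi_add_volume_neg_inter_Ioi _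
  have hshift : ∫⁻ α in Ico π (2 * π), F α = ∫⁻ α in Ico 0 π, F (α + π) := by
    rw [← (measurePreserving_add_right volume π).setLIntegral_comp_preimage measurableSet_Ico hF,
      preimage_add_const_Ico, sub_self, two_mul, add_sub_cancel_right]
  calc lineMeas A = ∫⁻ α in Ico 0 (2 * π), F α := by
        unfold lineMeas
        refine lintegral_congr fun α ↦ ?_
        exact lintegral_indicator_one (measurable_prodMk_left hA)
    _ = (∫⁻ α in Ico 0 π, F α) + ∫⁻ α in Ico 0 π, F (α + π) := by
        rw [← Ico_union_Ico_eq_Ico pi_pos.le (by linarith [pi_pos]),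
          lintegral_union measurableSet_Ico (Ico_disjoint_Ico_same), hshift]
    _ = ∫⁻ α in Ico 0 π, volume (Prod.mk α ⁻¹' lineHits A) := by
        rw [← lintegral_add_left hF]
        exact lintegral_congr hF_add_pi
    _ = lineMeasure (lineHits A) := (Measure.prod_apply hA).symm

theorem lineMeasure_lineHits_closedBall (z : EuclideanSpace ℝ (Fin 2)) (r : ℝ) :
    lineMeasure (lineHits (Metric.closedBall z r)) = ENNReal.ofReal (2 * π * r) := by
  have hslice (α : ℝ) : Prod.mk α ⁻¹' lineHits (Metric.closedBall z r)
      = Icc (⟪unitVec α, z⟫ - r) (⟪unitVec α, z⟫ + r) := by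
    ext t
    simp only [lineHits_closedBall, mem_preimage, mem_ofPred_eq, mem_Icc, abs_le]
    constructor <;> rintro ⟨h₁, h₂⟩ <;> constructor <;> linarith
  rw [lineMeasure, Measure.prod_apply (measurableSet_lineHits_closedBall z r)]
  simp_rw [hslice, Real.volume_Icc, add_sub_sub_cancel, ← two_mul]
  rw [setLIntegral_const, Real.volume_Ico, sub_zero, ← ENNReal.ofReal_mul' pi_pos.le]
  ring_nf

theorem exists_int_abs_sub_le_of_abs_cos_le_sin {β a : ℝ} (ha₀ : 0 ≤ a) (ha : a ≤ π / 2)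
    (h : |cos β| ≤ sin a) : ∃ k : ℤ, |β - (k * π + π / 2)| ≤ a := by
  set k := round ((β - π / 2) / π)
  refine ⟨k, ?_⟩
  set γ := β - (k * π + π / 2)
  have hγ : |γ| ≤ π / 2 := by
    have h := abs_sub_round ((β - π / 2) / π)
    have hγ_eq : γ = π * ((β - π / 2) / π - k) := by
      simp only [γ]; field_simp; ring
    rw [hγ_eq, abs_mul, abs_of_pos pi_pos]
    nlinarith [pi_pos]
  have hcos : |cos β| = sin |γ| := by
    have hβ : β = (γ + π / 2) + k * π := by simp only [γ]; ring
    rw [hβ, cos_add_int_mul_pi, abs_mul, abs_neg_one_zpow, one_mul, cos_add_pi_div_two, abs_neg,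
      abs_sin_eq_sin_abs_of_abs_le_pi (by linarith [pi_pos])]
  rw [hcos] at h
  exact strictMonoOn_sin.le_iff_le ⟨by linarith [abs_nonneg γ], hγ⟩ ⟨by linarith, ha⟩ |>.1 h

theorem volume_abs_inner_unitVec_le_inter_Ico_le {w : EuclideanSpace ℝ (Fin 2)} (hw : w ≠ 0)
    {e : ℝ} (he : 0 ≤ e) :
    volume ({α | |⟪unitVec α, w⟫| ≤ e} ∩ Ico 0 π) ≤ ENNReal.ofReal (8 * arcsin (e / ‖w‖)) := by
  have hw' : 0 < ‖w‖ := norm_pos_iff.2 hw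
  rcases le_or_gt 1 (e / ‖w‖) with hbig | hsmall
  · calc volume ({α | |⟪unitVec α, w⟫| ≤ e} ∩ Ico 0 π) ≤ volume (Ico 0 π) :=
          measure_mono inter_subset_right
      _ ≤ ENNReal.ofReal (8 * arcsin (e / ‖w‖)) := by
          rw [Real.volume_Ico, arcsin_of_one_le hbig]
          exact ENNReal.ofReal_le_ofReal (by linarith [pi_pos])
  set a := arcsin (e / ‖w‖)
  have ha₀ : 0 ≤ a := arcsin_nonneg.2 (by positivity)
  have hsin : sin a = e / ‖w‖ := sin_arcsin (by linarith [div_nonneg he hw'.le]) hsmall.le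
  obtain ⟨θ, ⟨hθ₁, hθ₂⟩, hwθ⟩ := exists_eq_norm_smul_unitVec w
  -- `|⟪unitVec α, w⟫| = ‖w‖ |cos (α - θ)|` is small only near the zeros `θ + kπ + π/2` of `cos`;
  -- since `α ∈ [0, π)` and `θ ∈ (-π, π]`, only `k ∈ [-2, 1]` occur.
  have hcover : {α | |⟪unitVec α, w⟫| ≤ e} ∩ Ico 0 π
      ⊆ ⋃ k ∈ Finset.Icc (-2 : ℤ) 1, Icc (θ + (k * π + π / 2) - a) (θ + (k * π + π / 2) + a) := by
    rintro α ⟨hα, hα₀, hαπ⟩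
    have hcos : |cos (α - θ)| ≤ sin a := by
      rw [mem_ofPred_eq, hwθ, inner_smul_right, inner_unitVec_unitVec, abs_mul, abs_norm] at hα
      rw [hsin, le_div_iff₀ hw', mul_comm]
      exact hα
    obtain ⟨k, hk⟩ := exists_int_abs_sub_le_of_abs_cos_le_sin ha₀ (arcsin_le_pi_div_two _) hcos
    have ha : a ≤ π / 2 := arcsin_le_pi_div_two _
    rw [abs_le] at hk
    have hk₁ : (-2 : ℝ) ≤ k := le_of_mul_le_mul_right (by linarith) pi_pos
    have hk₂ : (k : ℝ) < 2 := lt_of_mul_lt_mul_right (by linarith) pi_pos.le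
    refine mem_biUnion (Finset.mem_Icc.2 ⟨by exact_mod_cast hk₁, ?_⟩) ⟨by linarith, by linarith⟩
    have : k < 2 := by exact_mod_cast hk₂
    omega
  calc volume ({α | |⟪unitVec α, w⟫| ≤ e} ∩ Ico 0 π)
      ≤ ∑ k ∈ Finset.Icc (-2 : ℤ) 1,
          volume (Icc (θ + (k * π + π / 2) - a) (θ + (k * π + π / 2) + a)) :=
        (measure_mono hcover).trans (measure_biUnion_finset_le _ _)
    _ = 4 * ENNReal.ofReal (2 * a) := by
        simp only [Real.volume_Icc, add_sub_sub_cancel, Finset.sum_const, ← two_mul]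
        rw [show (Finset.Icc (-2 : ℤ) 1).card = 4 from rfl, nsmul_eq_mul, Nat.cast_ofNat]
    _ = ENNReal.ofReal (8 * a) := by
        rw [← ENNReal.ofReal_ofNat 4, ← ENNReal.ofReal_mul (by norm_num)]
        ring_nf

theorem lineMeasure_lineHits_closedBall_inter_le {z₁ z₂ : EuclideanSpace ℝ (Fin 2)} (hz : z₁ ≠ z₂)
    {r₁ r₂ : ℝ} (hr₁ : 0 ≤ r₁) (hr₂ : 0 ≤ r₂) :
    lineMeasure (lineHits (Metric.closedBall z₁ r₁) ∩ lineHits (Metric.closedBall z₂ r₂))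
      ≤ ENNReal.ofReal (16 * r₁ * arcsin ((r₁ + r₂) / dist z₁ z₂)) := by
  set H := lineHits (Metric.closedBall z₁ r₁) ∩ lineHits (Metric.closedBall z₂ r₂)
  set S := {α | |⟪unitVec α, z₁ - z₂⟫| ≤ r₁ + r₂}
  have hS : MeasurableSet S := by
    simp only [S, inner_unitVec]
    exact measurableSet_le (by fun_prop) measurable_const
  have hslice (α : ℝ) :
      volume (Prod.mk α ⁻¹' H) ≤ S.indicator (fun _ ↦ ENNReal.ofReal (2 * r₁)) α := by
    simp only [H, lineHits_closedBall]
    by_cases hα : α ∈ S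
    · rw [indicator_of_mem hα]
      calc _ ≤ volume (Icc (⟪unitVec α, z₁⟫ - r₁) (⟪unitVec α, z₁⟫ + r₁)) := by
            refine measure_mono fun t ht ↦ ?_
            have := abs_le.1 ht.1.out
            exact ⟨by linarith, by linarith⟩
        _ = ENNReal.ofReal (2 * r₁) := by rw [Real.volume_Icc]; ring_nf
    · rw [indicator_of_notMem hα, nonpos_iff_eq_zero, measure_eq_zero_iff_ae_notMem]
      refine Filter.Eventually.of_forall fun t ⟨ht₁, ht₂⟩ ↦ hα ?_
      calc |⟪unitVec α, z₁ - z₂⟫| = |(⟪unitVec α, z₁⟫ - t) - (⟪unitVec α, z₂⟫ - t)| := by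
            rw [inner_sub_right, sub_sub_sub_cancel_right]
        _ ≤ r₁ + r₂ := (abs_sub _ _).trans (add_le_add ht₁.out ht₂.out)
  have hH : MeasurableSet H :=
    (measurableSet_lineHits_closedBall z₁ r₁).inter (measurableSet_lineHits_closedBall z₂ r₂)
  calc lineMeasure H = ∫⁻ α in Ico 0 π, volume (Prod.mk α ⁻¹' H) := Measure.prod_apply hH
    _ ≤ ∫⁻ α in Ico 0 π, S.indicator (fun _ ↦ ENNReal.ofReal (2 * r₁)) α := lintegral_mono hslice
    _ = ENNReal.ofReal (2 * r₁) * volume (S ∩ Ico 0 π) := by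
        rw [lintegral_indicator_const hS, Measure.restrict_apply hS]
    _ ≤ ENNReal.ofReal (2 * r₁) * ENNReal.ofReal (8 * arcsin ((r₁ + r₂) / ‖z₁ - z₂‖)) := by
        gcongr
        exact volume_abs_inner_unitVec_le_inter_Ico_le (sub_ne_zero.2 hz) (by positivity)
    _ = ENNReal.ofReal (16 * r₁ * arcsin ((r₁ + r₂) / dist z₁ z₂)) := by
        rw [← ENNReal.ofReal_mul (by positivity), dist_eq_norm]
        ring_nf

theorem lineMeasure_lineHits_closedBall_inter_le_of_far {z₁ z₂ : EuclideanSpace ℝ (Fin 2)}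
    {r₁ r₂ R : ℝ} (hr₁ : 0 ≤ r₁) (hr₂ : 0 ≤ r₂) (h₁ : r₁ ≤ R) (h₂ : r₂ ≤ R) (hR : 0 < R)
    (hz : R ^ 3 < dist z₁ z₂) :
    lineMeasure (lineHits (Metric.closedBall z₁ r₁) ∩ lineHits (Metric.closedBall z₂ r₂))
      ≤ ENNReal.ofReal (16 * R * arcsin (2 / R ^ 2)) := by
  have hd : 0 < dist z₁ z₂ := (by positivity : 0 < R ^ 3).trans hz
  refine (lineMeasure_lineHits_closedBall_inter_le (dist_pos.1 hd) hr₁ hr₂).trans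
    (ENNReal.ofReal_le_ofReal ?_)
  have hx : (r₁ + r₂) / dist z₁ z₂ ≤ 2 / R ^ 2 :=
    calc (r₁ + r₂) / dist z₁ z₂ ≤ 2 * R / R ^ 3 :=
          div_le_div₀ (by positivity) (by linarith) (by positivity) hz.le
      _ = 2 / R ^ 2 := by field_simp
  have hx₀ : 0 ≤ arcsin ((r₁ + r₂) / dist z₁ z₂) := arcsin_nonneg.2 (by positivity)
  have := monotone_arcsin hx
  nlinarith

theorem sum_measure_le_measure_biUnion_add_sum_offDiag {α ι : Type*} [MeasurableSpace α]
    [DecidableEq ι] (μ : Measure α) {A : ι → Set α} (hA : ∀ i, MeasurableSet (A i))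
    (s : Finset ι) :
    ∑ i ∈ s, μ (A i) ≤ μ (⋃ i ∈ s, A i) + ∑ p ∈ s.offDiag, μ (A p.1 ∩ A p.2) := by
  induction s using Finset.induction_on with
  | empty => simp
  | insert a s ha ih =>
    set U := ⋃ i ∈ s, A i
    have hU : MeasurableSet U := .biUnion s.countable_toSet fun i _ ↦ hA i
    have hinter : μ (A a ∩ U) ≤ ∑ i ∈ s, μ (A a ∩ A i) := by
      rw [inter_iUnion₂]
      exact measure_biUnion_finset_le s _
    have hoff : ∑ p ∈ s.offDiag, μ (A p.1 ∩ A p.2) + ∑ i ∈ s, μ (A a ∩ A i)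
        ≤ ∑ p ∈ (insert a s).offDiag, μ (A p.1 ∩ A p.2) := by
      have hdisj : Disjoint s.offDiag ({a} ×ˢ s) := by
        simp only [Finset.disjoint_left, Finset.mem_offDiag, Finset.mem_product,
          Finset.mem_singleton]
        rintro ⟨i, j⟩ ⟨hi, -⟩ ⟨rfl, -⟩
        exact ha hi
      calc _ = ∑ p ∈ s.offDiag ∪ {a} ×ˢ s, μ (A p.1 ∩ A p.2) := by
            rw [Finset.sum_union hdisj, Finset.singleton_product, Finset.sum_map]
            rfl
        _ ≤ _ := by
            rw [Finset.offDiag_insert ha]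
            exact Finset.sum_le_sum_of_subset Finset.subset_union_left
    calc ∑ i ∈ insert a s, μ (A i) = μ (A a) + ∑ i ∈ s, μ (A i) := Finset.sum_insert ha
      _ ≤ μ (A a) + (μ U + ∑ p ∈ s.offDiag, μ (A p.1 ∩ A p.2)) := by gcongr
      _ = μ (A a ∪ U) + μ (A a ∩ U) + ∑ p ∈ s.offDiag, μ (A p.1 ∩ A p.2) := by
          rw [measure_union_add_inter _ hU, add_assoc]
      _ ≤ μ (A a ∪ U) + (∑ p ∈ s.offDiag, μ (A p.1 ∩ A p.2) + ∑ i ∈ s, μ (A a ∩ A i)) := by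
          rw [add_assoc, add_comm (μ (A a ∩ U))]
          gcongr
      _ ≤ μ (⋃ i ∈ insert a s, A i) + ∑ p ∈ (insert a s).offDiag, μ (A p.1 ∩ A p.2) := by
          rw [Finset.set_biUnion_insert]
          gcongr

section UnionOfDiscs

variable {ι : Type*} (z : ι → EuclideanSpace ℝ (Fin 2)) (r : ι → ℝ)

theorem lineMeas_iUnion_closedBall [Countable ι] :
    lineMeas (⋃ i, Metric.closedBall (z i) (r i))
      = lineMeasure (⋃ i, lineHits (Metric.closedBall (z i) (r i))) := by
  have hmeas : MeasurableSet (lineHits (⋃ i, Metric.closedBall (z i) (r i))) := by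
    rw [lineHits_iUnion]
    exact .iUnion fun i ↦ measurableSet_lineHits_closedBall (z i) (r i)
  rw [lineMeas_eq_lineMeasure hmeas, lineHits_iUnion]

theorem sum_lineMeasure_lineHits_closedBall (hr : ∀ i, 0 ≤ r i) (s : Finset ι) :
    ∑ i ∈ s, lineMeasure (lineHits (Metric.closedBall (z i) (r i)))
      = ENNReal.ofReal (2 * π * ∑ i ∈ s, r i) := by
  rw [Finset.mul_sum, ENNReal.ofReal_sum_of_nonneg fun i _ ↦ by have := hr i; positivity]
  simp_rw [lineMeasure_lineHits_closedBall]

variable [Fintype ι]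

theorem lineMeas_iUnion_closedBall_le (hr : ∀ i, 0 ≤ r i) :
    lineMeas (⋃ i, Metric.closedBall (z i) (r i)) ≤ ENNReal.ofReal (2 * π * ∑ i, r i) := by
  rw [lineMeas_iUnion_closedBall, ← sum_lineMeasure_lineHits_closedBall z r hr]
  exact measure_iUnion_fintype_le _ _

theorem ofReal_sub_le_lineMeas_iUnion_closedBall [DecidableEq ι] (hr : ∀ i, 0 ≤ r i) {δ : ℝ}
    (hδ : 0 ≤ δ) (hpair : ∀ i j, i ≠ j → lineMeasure
      (lineHits (Metric.closedBall (z i) (r i)) ∩ lineHits (Metric.closedBall (z j) (r j)))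
        ≤ ENNReal.ofReal δ) :
    ENNReal.ofReal (2 * π * ∑ i, r i - Fintype.card ι ^ 2 * δ)
      ≤ lineMeas (⋃ i, Metric.closedBall (z i) (r i)) := by
  set H := fun i ↦ lineHits (Metric.closedBall (z i) (r i))
  have hoff : ∑ p ∈ Finset.univ.offDiag, lineMeasure (H p.1 ∩ H p.2)
      ≤ ENNReal.ofReal (Fintype.card ι ^ 2 * δ) := by
    calc _ ≤ ∑ p ∈ Finset.univ.offDiag, ENNReal.ofReal δ :=
          Finset.sum_le_sum fun p hp ↦ hpair p.1 p.2 (Finset.mem_offDiag.1 hp).2.2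
      _ ≤ ∑ p ∈ (Finset.univ : Finset ι) ×ˢ Finset.univ, ENNReal.ofReal δ :=
          Finset.sum_le_sum_of_subset
            (Finset.diag_union_offDiag (Finset.univ : Finset ι) ▸ Finset.subset_union_right)
      _ = ENNReal.ofReal (Fintype.card ι ^ 2 * δ) := by
          rw [Finset.sum_const, Finset.card_product, Finset.card_univ, nsmul_eq_mul,
            ENNReal.ofReal_mul (by positivity), sq]
          norm_cast
  rw [ENNReal.ofReal_sub _ (by positivity), tsub_le_iff_right, lineMeas_iUnion_closedBall,
    ← sum_lineMeasure_lineHits_closedBall z r hr]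
  calc ∑ i, lineMeasure (H i)
      ≤ lineMeasure (⋃ i ∈ Finset.univ, H i)
          + ∑ p ∈ Finset.univ.offDiag, lineMeasure (H p.1 ∩ H p.2) :=
        sum_measure_le_measure_biUnion_add_sum_offDiag _
          (fun i ↦ measurableSet_lineHits_closedBall (z i) (r i)) _
    _ ≤ lineMeasure (⋃ i, H i) + ENNReal.ofReal (Fintype.card ι ^ 2 * δ) := by
        simp only [Finset.mem_univ, iUnion_true]
        gcongr

end UnionOfDiscs

/-- For `K ≥ 2` pairwise disjoint, well-separated discs (`|z_i − z_j| > R³`) with radii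
`r_i ∈ (v_ρ, R]` such that `4R arcsin(2/R²) ≤ c v_ρ⁻¹`, the measure of lines hitting
the union satisfies `2π ∑ r_i − c' v_ρ⁻¹ ≤ μ(⋃ B(z_i,r_i)) ≤ 2π ∑ r_i`, where `c'`
depends only on `K` (and `c`). -/
theorem lineMeas_union_discs (K : ℕ) (hK : 2 ≤ K) (c : ℝ) (hc : 0 < c) :
    ∃ c' : ℝ, 0 < c' ∧
      ∀ (vρ R : ℝ) (z : Fin K → EuclideanSpace ℝ (Fin 2)) (rad : Fin K → ℝ),
        0 < vρ → (∀ i, vρ < rad i) → (∀ i, rad i ≤ R) → (∃ i, rad i = R) →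
        (∀ i j, i ≠ j → R ^ 3 < dist (z i) (z j)) →
        (∀ i j, i ≠ j →
          Disjoint (Metric.closedBall (z i) (rad i)) (Metric.closedBall (z j) (rad j))) →
        4 * R * Real.arcsin (2 / R ^ 2) ≤ c * vρ⁻¹ →
        ENNReal.ofReal (2 * π * ∑ i, rad i - c' * vρ⁻¹)
            ≤ lineMeas (⋃ i, Metric.closedBall (z i) (rad i)) ∧
          lineMeas (⋃ i, Metric.closedBall (z i) (rad i))
            ≤ ENNReal.ofReal (2 * π * ∑ i, rad i) := by
  have hK₀ : (0 : ℝ) < K := by exact_mod_cast (by omega : 0 < K)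
  refine ⟨K ^ 2 * (4 * c), by positivity, ?_⟩
  intro vρ R z rad hvρ hrad hradR ⟨i₀, hi₀⟩ hsep _ harc
  have hr (i : Fin K) : 0 ≤ rad i := (hvρ.trans (hrad i)).le
  have hR : 0 < R := hi₀ ▸ hvρ.trans (hrad i₀)
  have hpair (i j : Fin K) (hij : i ≠ j) :
      lineMeasure (lineHits (Metric.closedBall (z i) (rad i))
        ∩ lineHits (Metric.closedBall (z j) (rad j))) ≤ ENNReal.ofReal (4 * c * vρ⁻¹) :=
    (lineMeasure_lineHits_closedBall_inter_le_of_far (hr i) (hr j) (hradR i) (hradR j) hR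
      (hsep i j hij)).trans (ENNReal.ofReal_le_ofReal (by linarith))
  refine ⟨?_, lineMeas_iUnion_closedBall_le z rad hr⟩
  have := ofReal_sub_le_lineMeas_iUnion_closedBall z rad hr (by positivity) hpair
  rwa [Fintype.card_fin, ← mul_assoc] at this
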